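/- Let φ: X → ω be a boundedly oscillating bounded-to-bounded function on an unbounded metric space X. Then there exists a finite-to-one function ε̃: ω → ω such that sup_{x∈X} diam φ(B(x, ε̃(φ(x)))) < ∞. -/

import Mathlib

def B2BNat {X : Type*} [MetricSpace X] (f : X → ℕ) : Prop :=
  ∀ B : Set X, Bornology.IsBounded B ↔ (f '' B).Finite

def FinToOne (f : ℕ → ℕ) : Prop := ∀ n : ℕ, (f ⁻¹' {n}).Finite

def BoundedlyOsc {X Y : Type*} [MetricSpace X] [MetricSpace Y] (φ : X → Y) : Prop :=
  ∃ D : ℝ, ∀ ε : ℝ, ∃ B : Set X, Bornology.IsBounded B ∧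
    ∀ x ∉ B, ∀ y ∈ φ '' Metric.closedBall x ε, ∀ z ∈ φ '' Metric.closedBall x ε,
      dist y z ≤ D

/-! Outside a bounded set `Bₙ` the function `φ` oscillates by at most `D` on balls of radius `n`,
and `φ` is bounded on `Bₙ`, say by `g n`, with `g` strictly increasing. Taking for `ε̃ k` the
largest `n ≤ k` with `g n ≤ k` (or `0`), a point `x` with `ε̃ (φ x) = n ≠ 0` has `φ x ≥ g n`, hence
lies outside `Bₙ`; and `ε̃` is finite-to-one because `ε̃ k > v` as soon as `k ≥ g (v + 1)`. -/

theorem exists_strictMono_ge (f : ℕ → ℕ) : ∃ g : ℕ → ℕ, StrictMono g ∧ ∀ n, f n ≤ g n := by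
  refine ⟨fun n => (Finset.range (n + 1)).sup f + n, strictMono_nat_of_lt_succ fun n => ?_,
    fun n => (Finset.le_sup (Finset.self_mem_range_succ n)).trans (Nat.le_add_right _ _)⟩
  have : (Finset.range (n + 1)).sup f ≤ (Finset.range (n + 1 + 1)).sup f :=
    Finset.sup_mono (Finset.range_subset_range.mpr (Nat.le_succ _))
  omega

theorem exists_strictMono_gt_on {X : Type*} {φ : X → ℕ} {B : ℕ → Set X}
    (hB : ∀ n, (φ '' B n).Finite) : ∃ g : ℕ → ℕ, StrictMono g ∧ ∀ n, ∀ x ∈ B n, φ x < g n := by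
  choose M hM using fun n => (hB n).bddAbove
  obtain ⟨g, hg, hMg⟩ := exists_strictMono_ge (M · + 1)
  exact ⟨g, hg, fun n x hx => Nat.lt_of_lt_of_le (Nat.lt_succ_of_le (hM n ⟨x, hx, rfl⟩)) (hMg n)⟩

def lowerInv (g : ℕ → ℕ) (k : ℕ) : ℕ := Nat.findGreatest (fun n => g n ≤ k) k

theorem apply_lowerInv_le {g : ℕ → ℕ} {k : ℕ} (h : lowerInv g k ≠ 0) : g (lowerInv g k) ≤ k :=
  Nat.findGreatest_of_ne_zero (P := fun n => g n ≤ k) rfl h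

theorem le_lowerInv {g : ℕ → ℕ} (hg : StrictMono g) {n k : ℕ} (h : g n ≤ k) : n ≤ lowerInv g k :=
  Nat.le_findGreatest ((hg.id_le n).trans h) h

theorem finToOne_lowerInv {g : ℕ → ℕ} (hg : StrictMono g) : FinToOne (lowerInv g) := by
  intro v
  refine (Set.finite_Iio (g (v + 1))).subset fun k (hk : lowerInv g k = v) => ?_
  by_contra hle
  have := le_lowerInv hg (not_lt.mp hle)
  omega

theorem stmt7_general {X : Type*} [MetricSpace X]
    (φ : X → ℕ) (h1 : BoundedlyOsc φ) (h2 : B2BNat φ) :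
    ∃ εt : ℕ → ℕ, FinToOne εt ∧ ∃ C : ℝ, ∀ x : X,
      ∀ y ∈ φ '' Metric.closedBall x (εt (φ x)),
        ∀ z ∈ φ '' Metric.closedBall x (εt (φ x)), dist y z ≤ C := by
  obtain ⟨D, hD⟩ := h1
  choose B hB hBosc using fun n : ℕ => hD n
  obtain ⟨g, hg, hφg⟩ := exists_strictMono_gt_on fun n => (h2 (B n)).mp (hB n)
  refine ⟨lowerInv g, finToOne_lowerInv hg, max D 0, fun x y hy z hz => ?_⟩
  rcases eq_or_ne (lowerInv g (φ x)) 0 with h0 | h0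
  · rw [h0, Nat.cast_zero, Metric.closedBall_zero, Set.image_singleton] at hy hz
    rw [hy, hz, dist_self]
    exact le_max_right _ _
  · have hx : x ∉ B (lowerInv g (φ x)) := fun hx => (hφg _ x hx).not_ge (apply_lowerInv_le h0)
    exact (hBosc _ x hx y hy z hz).trans (le_max_left _ _)

/-- For a boundedly oscillating bounded-to-bounded `φ : X → ℕ` on an unbounded metric
space there is a finite-to-one `ε̃ : ℕ → ℕ` with
`sup_x diam φ(B(x, ε̃ (φ x))) < ∞`. -/
theorem stmt7 {X : Type*} [MetricSpace X]
    (hX : ¬ Bornology.IsBounded (Set.univ : Set X))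
    (φ : X → ℕ) (h1 : BoundedlyOsc φ) (h2 : B2BNat φ) :
    ∃ εt : ℕ → ℕ, FinToOne εt ∧ ∃ C : ℝ, ∀ x : X,
      ∀ y ∈ φ '' Metric.closedBall x (εt (φ x)),
        ∀ z ∈ φ '' Metric.closedBall x (εt (φ x)), dist y z ≤ C :=
  stmt7_general φ h1 h2
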